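/- arXiv:2012.04453 — 5 statements merged into one kernel-verified Lean document; each statement's English description precedes it below -/
import Mathlib

section
/- Let N ≥ 3 and T > 0, let ξ : [0,T] → ℝ^N be continuous, and let u₀ : ℝ^N → ℝ be continuous, positive and bounded. Let u(x,t) = ∫_{ℝ^N} G(x,y,t) u₀(y) dy + ∫₀^t G(x,ξ(s),t-s) ds. Fix s₀ ∈ (0,T] and assume σ(r) = O(r²) as r → 0, i.e., there exist A > 0 and R₀ > 0 with σ(r) ≤ A r² for all r ∈ (0,R₀). Then for every θ ∈ (0,1) there exist constants C > 0 and R > 0 such that ∫_{B^r(T)} u(x,T) dx ≥ C (σ(θr) + r^N) for all r ∈ (0,R). -/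
/-!
Write `u(·, T) = e^{TΔ} u₀ + S` with `S(x) = ∫₀ᵀ G(x, ξ(s), T - s) ds`. Since `u₀` is bounded below
on compact sets, `e^{TΔ} u₀` is bounded below near `ξ(T)` by a positive constant, which gives the
`r^N` term. For `S`, exchange the integrals (Tonelli). When `T - s < σ(θr)` the pole `ξ(s)` stays
within `θr` of `ξ(T)`, and `T - s ≤ σ(θr) ≤ A θ² r²` makes `√(T - s)` at most a fixed multiple of
`r`; so `B^r(T)` contains a ball about `ξ(s)` of radius a fixed multiple of `√(T - s)`, which
carries a fixed fraction of the unit mass of `G(·, ξ(s), T - s)`. Integrating over those `s` gives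
the `σ(θr)` term. The unit mass of `G` and the boundedness of `u₀` make both terms integrable.
-/

open MeasureTheory Set Real Metric Module
open scoped ENNReal

theorem measureReal_closedBall_pos {X : Type*} [PseudoMetricSpace X] [ProperSpace X]
    [MeasurableSpace X] (μ : Measure X) [IsFiniteMeasureOnCompacts μ] [μ.IsOpenPosMeasure]
    (x : X) {r : ℝ} (hr : 0 < r) : 0 < μ.real (closedBall x r) :=
  ENNReal.toReal_pos (measure_closedBall_pos μ x hr).ne' measure_closedBall_lt_top.ne

section HeatKernel

variable {V : Type*} [NormedAddCommGroup V] [InnerProductSpace ℝ V]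

variable (V) in
noncomputable def heatKernel (t : ℝ) (x : V) : ℝ :=
  (4 * π * t) ^ (-(finrank ℝ V : ℝ) / 2) * exp (-‖x‖ ^ 2 / (4 * t))

variable {t : ℝ}

theorem heatKernel_nonneg (ht : 0 ≤ t) (x : V) : 0 ≤ heatKernel V t x := by
  unfold heatKernel; positivity

theorem heatKernel_eq_mul_exp_neg_mul_sq_norm (x : V) :
    heatKernel V t x = (4 * π * t) ^ (-(finrank ℝ V : ℝ) / 2) * exp (-(4 * t)⁻¹ * ‖x‖ ^ 2) := by
  rw [heatKernel]; congr 2; ring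

theorem heatKernel_sub_comm (t : ℝ) (x y : V) :
    heatKernel V t (x - y) = heatKernel V t (y - x) := by
  rw [heatKernel, heatKernel, norm_sub_rev]

theorem continuous_heatKernel : Continuous (heatKernel V t) := by
  unfold heatKernel; fun_prop

theorem heatKernel_ge_of_sq_norm_le (ht : 0 < t) {x : V} (hx : ‖x‖ ^ 2 ≤ t) :
    (4 * π * t) ^ (-(finrank ℝ V : ℝ) / 2) * exp (-1 / 4) ≤ heatKernel V t x := by
  refine mul_le_mul_of_nonneg_left (exp_le_exp.2 ?_) (by positivity)
  rw [div_le_div_iff₀ (by norm_num) (by positivity)]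
  linarith

variable [MeasurableSpace V] [BorelSpace V]

theorem measurable_heatKernel_uncurry : Measurable (fun p : ℝ × V => heatKernel V p.1 p.2) := by
  unfold heatKernel; fun_prop

variable [FiniteDimensional ℝ V]

theorem integral_heatKernel (ht : 0 < t) : ∫ x, heatKernel V t x = 1 := by
  simp_rw [heatKernel_eq_mul_exp_neg_mul_sq_norm]
  rw [integral_const_mul, GaussianFourier.integral_rexp_neg_mul_sq_norm (by positivity),
    show π / (4 * t)⁻¹ = 4 * π * t by field_simp, ← rpow_add (by positivity), neg_div,
    neg_add_cancel, rpow_zero]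

theorem integrable_heatKernel (ht : 0 < t) : Integrable (heatKernel V t) :=
  Integrable.of_integral_ne_zero (by rw [integral_heatKernel ht]; exact one_ne_zero)

theorem lintegral_heatKernel_sub (ht : 0 < t) (c : V) :
    ∫⁻ x, ENNReal.ofReal (heatKernel V t (x - c)) = 1 := by
  rw [← ofReal_integral_eq_lintegral_ofReal ((integrable_heatKernel ht).comp_sub_right c)
    (.of_forall fun x => heatKernel_nonneg ht.le _), integral_sub_right_eq_self,
    integral_heatKernel ht, ENNReal.ofReal_one]

variable (V) in
noncomputable def heatBallConst : ℝ :=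
  exp (-1 / 4) * (4 * π) ^ (-(finrank ℝ V : ℝ) / 2) * volume.real (closedBall (0 : V) 1)

theorem heatBallConst_pos : 0 < heatBallConst V := by
  have := measureReal_closedBall_pos volume (0 : V) one_pos
  unfold heatBallConst; positivity

theorem heatBallConst_mul_pow_le_setIntegral_heatKernel (ht : 0 < t) {κ : ℝ} (hκ0 : 0 ≤ κ)
    (hκ1 : κ ≤ 1) (c : V) :
    heatBallConst V * κ ^ finrank ℝ V ≤ ∫ x in closedBall c (κ * √t), heatKernel V t (x - c) := by
  have hrad : 0 ≤ κ * √t := by positivity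
  have hpt : ∀ x ∈ closedBall c (κ * √t),
      (4 * π * t) ^ (-(finrank ℝ V : ℝ) / 2) * exp (-1 / 4) ≤ heatKernel V t (x - c) := by
    intro x hx
    rw [mem_closedBall, dist_eq_norm] at hx
    refine heatKernel_ge_of_sq_norm_le ht ?_
    calc ‖x - c‖ ^ 2 ≤ (κ * √t) ^ 2 := by gcongr
      _ = κ ^ 2 * t := by rw [mul_pow, sq_sqrt ht.le]
      _ ≤ t := mul_le_of_le_one_left ht.le (pow_le_one₀ hκ0 hκ1)
  have hbound := setIntegral_ge_of_const_le_real isClosed_closedBall.measurableSet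
    measure_closedBall_lt_top.ne hpt ((integrable_heatKernel ht).comp_sub_right c).integrableOn
  rw [Measure.addHaar_real_closedBall' _ _ hrad] at hbound
  -- The powers of `t` cancel, which makes the bound uniform in `t`.
  have hscale : (4 * π * t) ^ (-(finrank ℝ V : ℝ) / 2) * (κ * √t) ^ finrank ℝ V
      = (4 * π) ^ (-(finrank ℝ V : ℝ) / 2) * κ ^ finrank ℝ V := by
    have : t ^ (-(finrank ℝ V : ℝ) / 2) * t ^ ((1 / 2 : ℝ) * finrank ℝ V) = 1 := by
      rw [← rpow_add ht, show -(finrank ℝ V : ℝ) / 2 + 1 / 2 * finrank ℝ V = 0 by ring, rpow_zero]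
    rw [mul_rpow (by positivity) ht.le, mul_pow, sqrt_eq_rpow, ← rpow_natCast (t ^ _),
      ← rpow_mul ht.le]
    linear_combination (4 * π) ^ (-(finrank ℝ V : ℝ) / 2) * κ ^ finrank ℝ V * this
  unfold heatBallConst
  linear_combination hbound - exp (-1 / 4) * volume.real (closedBall (0 : V) 1) * hscale

end HeatKernel

section HeatFlow

variable {V : Type*} [NormedAddCommGroup V] [InnerProductSpace ℝ V] [FiniteDimensional ℝ V]
  [MeasurableSpace V] [BorelSpace V]

noncomputable def heatFlow (t : ℝ) (f : V → ℝ) (x : V) : ℝ :=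
  ∫ y, heatKernel V t (x - y) * f y

variable {t M : ℝ} {f : V → ℝ}

theorem integrable_heatKernel_sub_mul (ht : 0 < t) (hf : AEStronglyMeasurable f)
    (hM : ∀ y, |f y| ≤ M) (x : V) : Integrable (fun y => heatKernel V t (x - y) * f y) :=
  ((integrable_heatKernel ht).comp_sub_left x).mul_bdd hf (c := M) (.of_forall hM)

theorem abs_heatFlow_le (ht : 0 < t) (hM : ∀ y, |f y| ≤ M) (x : V) : |heatFlow t f x| ≤ M :=
  calc |heatFlow t f x| = ‖∫ y, heatKernel V t (x - y) * f y‖ := rfl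
    _ ≤ ∫ y, heatKernel V t (x - y) * M :=
        norm_integral_le_of_norm_le (((integrable_heatKernel ht).comp_sub_left x).mul_const M)
          (.of_forall fun y => by
            rw [norm_mul, Real.norm_of_nonneg (heatKernel_nonneg ht.le _)]
            exact mul_le_mul_of_nonneg_left (hM y) (heatKernel_nonneg ht.le _))
    _ = M := by
        rw [integral_mul_const, integral_sub_left_eq_self (heatKernel V t), integral_heatKernel ht,
          one_mul]

theorem measurable_heatFlow (hf : Measurable f) : Measurable (heatFlow t f) :=
  (((continuous_heatKernel.measurable.comp (measurable_fst.sub measurable_snd)).mul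
    (hf.comp measurable_snd)).stronglyMeasurable.integral_prod_right').measurable

theorem integrableOn_heatFlow (ht : 0 < t) (hf : Measurable f) (hM : ∀ y, |f y| ≤ M) {s : Set V}
    (hs : volume s ≠ ⊤) : IntegrableOn (heatFlow t f) s :=
  Measure.integrableOn_of_bounded hs (measurable_heatFlow hf).aestronglyMeasurable
    (.of_forall fun x => abs_heatFlow_le ht hM x)

theorem mul_heatBallConst_le_heatFlow (ht : 0 < t) (hf : AEStronglyMeasurable f)
    (hM : ∀ y, |f y| ≤ M) (hf0 : ∀ y, 0 ≤ f y) {x : V} {m : ℝ} (hm0 : 0 ≤ m)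
    (hm : ∀ y ∈ closedBall x √t, m ≤ f y) : m * heatBallConst V ≤ heatFlow t f x := by
  have hball := heatBallConst_mul_pow_le_setIntegral_heatKernel (V := V) ht zero_le_one le_rfl x
  rw [one_pow, mul_one, one_mul] at hball
  calc m * heatBallConst V ≤ m * ∫ y in closedBall x √t, heatKernel V t (y - x) := by gcongr
    _ = ∫ y in closedBall x √t, heatKernel V t (x - y) * m := by
        rw [← integral_const_mul]; simp_rw [heatKernel_sub_comm t x, mul_comm m]
    _ ≤ ∫ y in closedBall x √t, heatKernel V t (x - y) * f y :=
        setIntegral_mono_on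
          (((integrable_heatKernel ht).comp_sub_left x).mul_const m).integrableOn
          (integrable_heatKernel_sub_mul ht hf hM x).integrableOn
          isClosed_closedBall.measurableSet fun y hy =>
          mul_le_mul_of_nonneg_left (hm y hy) (heatKernel_nonneg ht.le _)
    _ ≤ heatFlow t f x := setIntegral_le_integral (integrable_heatKernel_sub_mul ht hf hM x)
        (.of_forall fun y => mul_nonneg (heatKernel_nonneg ht.le _) (hf0 y))

theorem exists_pos_mul_pow_le_setIntegral_heatFlow (ht : 0 < t) (hfc : Continuous f)
    (hfpos : ∀ y, 0 < f y) (hM : ∀ y, f y ≤ M) (z : V) :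
    ∃ c > 0, ∀ r ∈ Ioc (0 : ℝ) 1, c * r ^ finrank ℝ V ≤ ∫ x in closedBall z r, heatFlow t f x := by
  obtain ⟨y₀, -, hy₀⟩ := (isCompact_closedBall z (1 + √t)).exists_isMinOn
    (nonempty_closedBall.2 (by positivity)) hfc.continuousOn
  have habs : ∀ y, |f y| ≤ M := fun y => (abs_of_pos (hfpos y)).trans_le (hM y)
  have hpos := mul_pos (mul_pos (hfpos y₀) (heatBallConst_pos (V := V)))
    (measureReal_closedBall_pos volume (0 : V) one_pos)
  refine ⟨_, hpos, fun r hr => ?_⟩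
  have hlow : ∀ x ∈ closedBall z r, f y₀ * heatBallConst V ≤ heatFlow t f x := fun x hx =>
    mul_heatBallConst_le_heatFlow ht hfc.aestronglyMeasurable habs (fun y => (hfpos y).le)
      (hfpos y₀).le fun y hy => hy₀ <| closedBall_subset_closedBall'
        (by rw [mem_closedBall] at hx; linarith [hr.2]) hy
  have := setIntegral_ge_of_const_le_real isClosed_closedBall.measurableSet
    measure_closedBall_lt_top.ne hlow
    (integrableOn_heatFlow ht hfc.measurable habs measure_closedBall_lt_top.ne)
  rw [Measure.addHaar_real_closedBall' _ _ hr.1.le] at this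
  linarith

end HeatFlow

section Duhamel

variable {V : Type*} [NormedAddCommGroup V] [InnerProductSpace ℝ V]

noncomputable def duhamelTerm (ζ : ℝ → V) (T : ℝ) (x : V) : ℝ :=
  ∫ s in Ioo 0 T, heatKernel V (T - s) (x - ζ s)

variable {ζ : ℝ → V} {T : ℝ}

theorem duhamelTerm_nonneg (x : V) : 0 ≤ duhamelTerm ζ T x :=
  setIntegral_nonneg measurableSet_Ioo fun _ hs => heatKernel_nonneg (sub_nonneg.2 hs.2.le) _

variable [FiniteDimensional ℝ V] [MeasurableSpace V] [BorelSpace V]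

theorem measurable_duhamelIntegrand (hζ : Measurable ζ) :
    Measurable (fun p : V × ℝ => heatKernel V (T - p.2) (p.1 - ζ p.2)) :=
  measurable_heatKernel_uncurry.comp
    ((measurable_const.sub measurable_snd).prodMk (measurable_fst.sub (hζ.comp measurable_snd)))

theorem lintegral_duhamelIntegrand_comm (hζ : Measurable ζ) (μ : Measure V) [SFinite μ] :
    ∫⁻ x, (∫⁻ s in Ioo 0 T, ENNReal.ofReal (heatKernel V (T - s) (x - ζ s))) ∂μ
      = ∫⁻ s in Ioo 0 T, ∫⁻ x, ENNReal.ofReal (heatKernel V (T - s) (x - ζ s)) ∂μ :=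
  lintegral_lintegral_swap (measurable_duhamelIntegrand hζ).ennreal_ofReal.aemeasurable

theorem lintegral_lintegral_duhamelIntegrand (hζ : Measurable ζ) :
    ∫⁻ x, ∫⁻ s in Ioo 0 T, ENNReal.ofReal (heatKernel V (T - s) (x - ζ s)) = ENNReal.ofReal T := by
  rw [lintegral_duhamelIntegrand_comm hζ, setLIntegral_congr_fun measurableSet_Ioo
    fun s hs => lintegral_heatKernel_sub (sub_pos.2 hs.2) (ζ s), setLIntegral_one,
    Real.volume_Ioo, sub_zero]

theorem ofReal_duhamelTerm_ae_eq (hζ : Measurable ζ) :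
    ∀ᵐ x, ENNReal.ofReal (duhamelTerm ζ T x)
      = ∫⁻ s in Ioo 0 T, ENNReal.ofReal (heatKernel V (T - s) (x - ζ s)) := by
  filter_upwards [ae_lt_top
    (measurable_duhamelIntegrand (T := T) hζ).ennreal_ofReal.lintegral_prod_right'
    (by rw [lintegral_lintegral_duhamelIntegrand hζ]; exact ENNReal.ofReal_ne_top)] with x hx
  have hnn : 0 ≤ᵐ[volume.restrict (Ioo 0 T)] fun s => heatKernel V (T - s) (x - ζ s) :=
    ae_restrict_of_forall_mem measurableSet_Ioo fun _ hs =>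
      heatKernel_nonneg (sub_nonneg.2 hs.2.le) _
  have hmeas := (measurable_duhamelIntegrand (T := T) hζ).comp (measurable_prodMk_left (x := x))
  exact ofReal_integral_eq_lintegral_ofReal
    ⟨hmeas.aestronglyMeasurable, (hasFiniteIntegral_iff_ofReal hnn).2 hx⟩ hnn

theorem integrable_duhamelTerm (hζ : Measurable ζ) : Integrable (duhamelTerm ζ T) := by
  refine ⟨(measurable_duhamelIntegrand hζ).stronglyMeasurable.integral_prod_right'
      |>.aestronglyMeasurable,
    (hasFiniteIntegral_iff_ofReal (.of_forall duhamelTerm_nonneg)).2 ?_⟩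
  rw [lintegral_congr_ae (ofReal_duhamelTerm_ae_eq hζ), lintegral_lintegral_duhamelIntegrand hζ]
  exact ENNReal.ofReal_lt_top

theorem setIntegral_duhamelTerm (hζ : Measurable ζ) (B : Set V) :
    ∫ x in B, duhamelTerm ζ T x
      = (∫⁻ s in Ioo 0 T, ∫⁻ x in B, ENNReal.ofReal (heatKernel V (T - s) (x - ζ s))).toReal := by
  rw [integral_eq_lintegral_of_nonneg_ae (.of_forall duhamelTerm_nonneg)
    (integrable_duhamelTerm hζ).aestronglyMeasurable.restrict,
    lintegral_congr_ae (ae_restrict_of_ae (ofReal_duhamelTerm_ae_eq hζ)),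
    lintegral_duhamelIntegrand_comm hζ]

theorem heatBallConst_mul_pow_mul_le_setIntegral_duhamelTerm (hζ : Measurable ζ) {B : Set V}
    {τ κ : ℝ} (hτ0 : 0 ≤ τ) (hτT : τ ≤ T) (hκ0 : 0 ≤ κ) (hκ1 : κ ≤ 1)
    (hB : ∀ s ∈ Ioo (T - τ) T, closedBall (ζ s) (κ * √(T - s)) ⊆ B) :
    heatBallConst V * κ ^ finrank ℝ V * τ ≤ ∫ x in B, duhamelTerm ζ T x := by
  set c := heatBallConst V * κ ^ finrank ℝ V
  have hc : 0 ≤ c := mul_nonneg heatBallConst_pos.le (pow_nonneg hκ0 _)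
  have hinner : ∀ s ∈ Ioo (T - τ) T,
      ENNReal.ofReal c ≤ ∫⁻ x in B, ENNReal.ofReal (heatKernel V (T - s) (x - ζ s)) := by
    intro s hs
    have ht : 0 < T - s := sub_pos.2 hs.2
    calc ENNReal.ofReal c
        ≤ ENNReal.ofReal (∫ x in closedBall (ζ s) (κ * √(T - s)), heatKernel V (T - s) (x - ζ s)) :=
          ENNReal.ofReal_le_ofReal (heatBallConst_mul_pow_le_setIntegral_heatKernel ht hκ0 hκ1 _)
      _ = ∫⁻ x in closedBall (ζ s) (κ * √(T - s)),
            ENNReal.ofReal (heatKernel V (T - s) (x - ζ s)) :=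
          ofReal_integral_eq_lintegral_ofReal
            ((integrable_heatKernel ht).comp_sub_right _).integrableOn
            (.of_forall fun _ => heatKernel_nonneg ht.le _)
      _ ≤ _ := lintegral_mono_set (hB s hs)
  have hfin : ∫⁻ s in Ioo 0 T, ∫⁻ x in B, ENNReal.ofReal (heatKernel V (T - s) (x - ζ s)) ≠ ⊤ := by
    refine ne_top_of_le_ne_top (ENNReal.ofReal_ne_top (r := T)) ?_
    calc _ ≤ ∫⁻ s in Ioo 0 T, ∫⁻ x, ENNReal.ofReal (heatKernel V (T - s) (x - ζ s)) :=
          lintegral_mono fun _ => setLIntegral_le_lintegral _ _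
      _ = ENNReal.ofReal T := by
          rw [← lintegral_duhamelIntegrand_comm hζ, lintegral_lintegral_duhamelIntegrand hζ]
  rw [setIntegral_duhamelTerm hζ]
  calc c * τ = (∫⁻ _ in Ioo (T - τ) T, ENNReal.ofReal c).toReal := by
        rw [setLIntegral_const, Real.volume_Ioo, sub_sub_cancel, ENNReal.toReal_mul,
          ENNReal.toReal_ofReal hc, ENNReal.toReal_ofReal hτ0]
    _ ≤ _ := ENNReal.toReal_mono hfin ((setLIntegral_mono' measurableSet_Ioo hinner).trans
        (lintegral_mono_set (Ioo_subset_Ioo_left (by linarith))))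

end Duhamel

section FirstExitTime

noncomputable def firstExitTime (g : ℝ → ℝ) (s₀ r : ℝ) : ℝ :=
  sInf (insert s₀ {s ∈ Icc 0 s₀ | r < g s})

variable {g : ℝ → ℝ} {s₀ r : ℝ}

theorem bddBelow_insert_sep_Icc : BddBelow (insert s₀ {s ∈ Icc 0 s₀ | r < g s}) :=
  bddBelow_insert.2 (bddBelow_Icc.mono (sep_subset _ _))

theorem firstExitTime_le : firstExitTime g s₀ r ≤ s₀ :=
  csInf_le bddBelow_insert_sep_Icc (mem_insert _ _)

theorem firstExitTime_nonneg (hs₀ : 0 ≤ s₀) : 0 ≤ firstExitTime g s₀ r :=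
  le_csInf (insert_nonempty _ _) <| by rintro s (rfl | hs); exacts [hs₀, hs.1.1]

theorem le_of_lt_firstExitTime {t : ℝ} (ht0 : 0 ≤ t) (ht : t < firstExitTime g s₀ r) : g t ≤ r := by
  by_contra! hlt
  exact (csInf_le bddBelow_insert_sep_Icc
    (mem_insert_of_mem _ ⟨⟨ht0, ht.le.trans firstExitTime_le⟩, hlt⟩)).not_gt ht

theorem dist_le_of_lt_firstExitTime {E : Type*} [NormedAddCommGroup E] {ξ : ℝ → E} {T s : ℝ}
    (hsT : s ≤ T) (hs : T - s < firstExitTime (fun s => ‖ξ (T - s) - ξ T‖) s₀ r) :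
    dist (ξ s) (ξ T) ≤ r := by
  simpa [dist_eq_norm] using le_of_lt_firstExitTime (sub_nonneg.2 hsT) hs

end FirstExitTime

theorem ContinuousOn.exists_continuous_eqOn_Icc {X : Type*} [TopologicalSpace X] {f : ℝ → X}
    {a b : ℝ} (hab : a ≤ b) (hf : ContinuousOn f (Icc a b)) :
    ∃ g : ℝ → X, Continuous g ∧ EqOn g f (Icc a b) :=
  ⟨IccExtend hab ((Icc a b).domRestrict f), continuous_IccExtend_iff.2 hf.domRestrict,
    fun _ hx => IccExtend_of_mem _ _ hx⟩

theorem closedBall_subset_closedBall_of_dist_le_of_le_mul_sq {X : Type*} [PseudoMetricSpace X]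
    {x z : X} {A θ r t : ℝ} (hA : 0 < A) (hθ0 : 0 < θ) (hθ1 : θ ≤ 1) (hr : 0 ≤ r)
    (hxz : dist x z ≤ θ * r) (ht : t ≤ A * (θ * r) ^ 2) :
    closedBall x (min ((1 - θ) / (√A * θ)) 1 * √t) ⊆ closedBall z r := by
  have hsqrt : √t ≤ √A * θ * r :=
    sqrt_le_iff.2 ⟨by positivity, by rw [mul_assoc, mul_pow, sq_sqrt hA.le]; exact ht⟩
  have hrad : min ((1 - θ) / (√A * θ)) 1 * √t ≤ (1 - θ) * r :=
    calc _ ≤ (1 - θ) / (√A * θ) * (√A * θ * r) :=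
          mul_le_mul (min_le_left _ _) hsqrt (sqrt_nonneg _)
            (div_nonneg (by linarith) (by positivity))
      _ = (1 - θ) * r := by field_simp
  exact closedBall_subset_closedBall' (by linarith)

theorem stmt3_general (N : ℕ) (T : ℝ) (hT : 0 < T)
    (ξ : ℝ → EuclideanSpace ℝ (Fin N)) (hξ : ContinuousOn ξ (Icc 0 T))
    (u₀ : EuclideanSpace ℝ (Fin N) → ℝ) (hu₀c : Continuous u₀)
    (hu₀pos : ∀ x, 0 < u₀ x) (hu₀bdd : ∃ M, ∀ x, u₀ x ≤ M)
    -- the heat kernel G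
    (G : EuclideanSpace ℝ (Fin N) → EuclideanSpace ℝ (Fin N) → ℝ → ℝ)
    (hG : ∀ x y t, G x y t =
      (4 * Real.pi * t) ^ (-(N : ℝ) / 2) * Real.exp (-‖x - y‖ ^ 2 / (4 * t)))
    -- the solution u of u_t - Δu = δ(x - ξ(t)), u(·,0) = u₀
    (u : EuclideanSpace ℝ (Fin N) → ℝ → ℝ)
    (hu : ∀ x t, u x t = (∫ y, G x y t * u₀ y) + ∫ s in (0:ℝ)..t, G x (ξ s) (t - s))
    (s₀ : ℝ) (hs₀ : s₀ ∈ Ioc 0 T)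
    -- the first exit time σ (equal to s₀ when the set is empty)
    (σ : ℝ → ℝ)
    (hσ : ∀ r : ℝ, σ r = sInf (insert s₀ {s ∈ Icc 0 s₀ | r < ‖ξ (T - s) - ξ T‖}))
    -- σ(r) = O(r²) as r → 0
    (A R₀ : ℝ) (hA : 0 < A) (hR₀ : 0 < R₀)
    (hσO : ∀ r ∈ Ioo (0:ℝ) R₀, σ r ≤ A * r ^ 2)
    (θ : ℝ) (hθ : θ ∈ Ioo (0:ℝ) 1) :
    ∃ C > (0:ℝ), ∃ R > (0:ℝ), ∀ r ∈ Ioo (0:ℝ) R,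
      C * (σ (θ * r) + r ^ N) ≤ ∫ x in Metric.closedBall (ξ T) r, u x T := by
  obtain ⟨M, hM⟩ := hu₀bdd
  obtain ⟨ζ, hζ, hζξ⟩ := hξ.exists_continuous_eqOn_Icc hT.le
  have hkernel : ∀ x y t, G x y t = heatKernel _ t (x - y) := by simp [hG, heatKernel]
  have huT : ∀ x, u x T = heatFlow T u₀ x + duhamelTerm ζ T x := fun x => by
    rw [hu, intervalIntegral.integral_of_le hT.le, integral_Ioc_eq_integral_Ioo]
    simp_rw [hkernel]
    congr 1
    exact setIntegral_congr_fun measurableSet_Ioo fun s hs => by rw [hζξ (Ioo_subset_Icc_self hs)]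
  obtain ⟨cH, hcH, hH⟩ := exists_pos_mul_pow_le_setIntegral_heatFlow hT hu₀c hu₀pos hM (ξ T)
  set κ := min ((1 - θ) / (√A * θ)) 1
  have hκ : 0 < κ := lt_min (div_pos (by linarith [hθ.2]) (by positivity [hθ.1])) one_pos
  set cS := heatBallConst (EuclideanSpace ℝ (Fin N)) * κ ^ N
  refine ⟨min cH cS, lt_min hcH (mul_pos heatBallConst_pos (pow_pos hκ N)), min R₀ 1,
    lt_min hR₀ one_pos, fun r ⟨hr0, hrR⟩ => ?_⟩
  set τ := σ (θ * r)
  have hτ : τ = firstExitTime (fun s => ‖ξ (T - s) - ξ T‖) s₀ (θ * r) := hσ _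
  have hτ0 : 0 ≤ τ := hτ ▸ firstExitTime_nonneg hs₀.1.le
  have hτT : τ ≤ T := hτ ▸ firstExitTime_le.trans hs₀.2
  have hτA : τ ≤ A * (θ * r) ^ 2 :=
    hσO _ ⟨by nlinarith [hθ.1], by nlinarith [hθ.1, hθ.2, hrR.trans_le (min_le_left _ _)]⟩
  have hball : ∀ s ∈ Ioo (T - τ) T, closedBall (ζ s) (κ * √(T - s)) ⊆ closedBall (ξ T) r := by
    intro s ⟨hs1, hs2⟩
    rw [hζξ ⟨by linarith, hs2.le⟩]
    exact closedBall_subset_closedBall_of_dist_le_of_le_mul_sq hA hθ.1 hθ.2.le hr0.le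
      (dist_le_of_lt_firstExitTime hs2.le (by rw [← hτ]; linarith)) (by linarith)
  have hS := heatBallConst_mul_pow_mul_le_setIntegral_duhamelTerm hζ.measurable hτ0 hτT hκ.le
    (min_le_right _ _) hball
  have hH := hH r ⟨hr0, hrR.le.trans (min_le_right _ _)⟩
  rw [finrank_euclideanSpace_fin] at hS hH
  rw [setIntegral_congr_fun measurableSet_closedBall fun x _ => huT x, integral_add
    (integrableOn_heatFlow hT hu₀c.measurable (fun y => (abs_of_pos (hu₀pos y)).trans_le (hM y))
      measure_closedBall_lt_top.ne) (integrable_duhamelTerm hζ.measurable).integrableOn]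
  nlinarith [min_le_left cH cS, min_le_right cH cS, pow_nonneg hr0.le N]

theorem stmt3 (N : ℕ) (hN : 3 ≤ N) (T : ℝ) (hT : 0 < T)
    (ξ : ℝ → EuclideanSpace ℝ (Fin N)) (hξ : ContinuousOn ξ (Icc 0 T))
    (u₀ : EuclideanSpace ℝ (Fin N) → ℝ) (hu₀c : Continuous u₀)
    (hu₀pos : ∀ x, 0 < u₀ x) (hu₀bdd : ∃ M, ∀ x, u₀ x ≤ M)
    -- the heat kernel G
    (G : EuclideanSpace ℝ (Fin N) → EuclideanSpace ℝ (Fin N) → ℝ → ℝ)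
    (hG : ∀ x y t, G x y t =
      (4 * Real.pi * t) ^ (-(N : ℝ) / 2) * Real.exp (-‖x - y‖ ^ 2 / (4 * t)))
    -- the solution u of u_t - Δu = δ(x - ξ(t)), u(·,0) = u₀
    (u : EuclideanSpace ℝ (Fin N) → ℝ → ℝ)
    (hu : ∀ x t, u x t = (∫ y, G x y t * u₀ y) + ∫ s in (0:ℝ)..t, G x (ξ s) (t - s))
    (s₀ : ℝ) (hs₀ : s₀ ∈ Ioc 0 T)
    -- the first exit time σ (equal to s₀ when the set is empty)
    (σ : ℝ → ℝ)
    (hσ : ∀ r : ℝ, σ r = sInf (insert s₀ {s ∈ Icc 0 s₀ | r < ‖ξ (T - s) - ξ T‖}))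
    -- σ(r) = O(r²) as r → 0
    (A R₀ : ℝ) (hA : 0 < A) (hR₀ : 0 < R₀)
    (hσO : ∀ r ∈ Ioo (0:ℝ) R₀, σ r ≤ A * r ^ 2)
    (θ : ℝ) (hθ : θ ∈ Ioo (0:ℝ) 1) :
    ∃ C > (0:ℝ), ∃ R > (0:ℝ), ∀ r ∈ Ioo (0:ℝ) R,
      C * (σ (θ * r) + r ^ N) ≤ ∫ x in Metric.closedBall (ξ T) r, u x T :=
  stmt3_general N T hT ξ hξ u₀ hu₀c hu₀pos hu₀bdd G hG u hu s₀ hs₀ σ hσ A R₀ hA hR₀ hσO θ hθ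
end

section
/- Let N ≥ 1, r > 0, s > 0 and a ∈ ℝ^N. Then ∫_{{y ∈ ℝ^N : |y| ≤ r}} exp(-|y - a|²/(4s)) dy ≤ ∫_{{y ∈ ℝ^N : |y| ≤ r}} exp(-|y|²/(4s)) dy. That is, the Gaussian integral over a ball centered at the origin dominates the corresponding integral of the Gaussian centered at any other point a over the same ball. -/
/-!
After the substitution `y ↦ y - a` the left side integrates the radially decreasing Gaussian over
the ball `B(-a, r)`. This ball and `B(0, r)` have the same volume, hence so do `B(-a, r) \ B(0, r)`
and `B(0, r) \ B(-a, r)`; the Gaussian is at most `exp (-r² / 4s)` on the first and at least that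
on the second, so moving the mass from the one to the other can only increase the integral.
-/

open MeasureTheory Set Metric

section

variable {X : Type*} [MeasurableSpace X] {μ : Measure X} {f : X → ℝ} {s t : Set X}

theorem setIntegral_le_setIntegral_of_measure_sdiff_eq (hs : MeasurableSet s)
    (ht : MeasurableSet t) (hfs : IntegrableOn f s μ) (hft : IntegrableOn f t μ)
    (hμ : μ (s \ t) = μ (t \ s)) (hμt : μ (t \ s) ≠ ⊤) {c : ℝ}
    (hf_le : ∀ x ∈ s \ t, f x ≤ c) (hf_ge : ∀ x ∈ t \ s, c ≤ f x) :
    ∫ x in s, f x ∂μ ≤ ∫ x in t, f x ∂μ := by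
  have hμs : μ (s \ t) ≠ ⊤ := hμ ▸ hμt
  have h_sdiff : ∫ x in s \ t, f x ∂μ ≤ ∫ x in t \ s, f x ∂μ :=
    calc ∫ x in s \ t, f x ∂μ ≤ ∫ _ in s \ t, c ∂μ :=
          setIntegral_mono_on (hfs.mono_set sdiff_subset) (integrableOn_const hμs) (hs.diff ht)
            hf_le
      _ = c * μ.real (t \ s) := by
          rw [setIntegral_const, smul_eq_mul, mul_comm, measureReal_def, hμ, measureReal_def]
      _ ≤ ∫ x in t \ s, f x ∂μ := setIntegral_ge_of_const_le_real (ht.diff hs) hμt hf_ge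
        (hft.mono_set sdiff_subset)
  rw [← integral_inter_add_sdiff ht hfs, ← integral_inter_add_sdiff hs hft, inter_comm]
  gcongr

end

variable {E : Type*} [NormedAddCommGroup E] [MeasurableSpace E] [BorelSpace E] {μ : Measure E}

theorem setIntegral_closedBall_comp_sub_right [μ.IsAddRightInvariant] (f : E → ℝ) (c a : E)
    (r : ℝ) :
    ∫ x in closedBall c r, f (x - a) ∂μ = ∫ x in closedBall (c - a) r, f x ∂μ := by
  have hpre : (· - a) ⁻¹' closedBall (c - a) r = closedBall c r := by
    ext x; simp [dist_eq_norm]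
  rw [← hpre]
  exact (measurePreserving_sub_right μ a).setIntegral_preimage_emb
    (measurableEmbedding_subRight a) f _

variable [NormedSpace ℝ E] [FiniteDimensional ℝ E] [μ.IsAddHaarMeasure]

theorem setIntegral_closedBall_le_setIntegral_closedBall_zero {g : ℝ → ℝ}
    (hg : AntitoneOn g (Ici 0)) (hgi : LocallyIntegrable (fun x => g ‖x‖) μ) (c : E) {r : ℝ}
    (hr : 0 ≤ r) :
    ∫ x in closedBall c r, g ‖x‖ ∂μ ≤ ∫ x in closedBall 0 r, g ‖x‖ ∂μ := by
  refine setIntegral_le_setIntegral_of_measure_sdiff_eq (c := g r) measurableSet_closedBall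
    measurableSet_closedBall (hgi.integrableOn_isCompact (isCompact_closedBall _ _))
    (hgi.integrableOn_isCompact (isCompact_closedBall _ _)) ?_ ?_ ?_ ?_
  · exact measure_sdiff_symm measurableSet_closedBall.nullMeasurableSet
      measurableSet_closedBall.nullMeasurableSet (μ.addHaar_closedBall_center c r)
      (measure_inter_lt_top_of_left_ne_top measure_closedBall_lt_top.ne).ne
  · exact ne_top_of_le_ne_top measure_closedBall_lt_top.ne (measure_mono sdiff_subset)
  · rintro x ⟨-, hx⟩
    rw [mem_closedBall_zero_iff, not_le] at hx
    exact hg hr (norm_nonneg x) hx.le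
  · rintro x ⟨hx, -⟩
    rw [mem_closedBall_zero_iff] at hx
    exact hg (norm_nonneg x) hr hx

theorem antitoneOn_exp_neg_sq_div {s : ℝ} (hs : 0 < s) :
    AntitoneOn (fun t : ℝ => Real.exp (-t ^ 2 / (4 * s))) (Ici 0) := by
  intro x hx y _ hxy
  dsimp only
  gcongr

theorem stmt9_general (N : ℕ) (r s : ℝ) (hr : 0 < r) (hs : 0 < s)
    (a : EuclideanSpace ℝ (Fin N)) :
    ∫ y in Metric.closedBall (0 : EuclideanSpace ℝ (Fin N)) r,
        Real.exp (-‖y - a‖ ^ 2 / (4 * s)) ≤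
      ∫ y in Metric.closedBall (0 : EuclideanSpace ℝ (Fin N)) r,
        Real.exp (-‖y‖ ^ 2 / (4 * s)) := by
  rw [setIntegral_closedBall_comp_sub_right (fun y => Real.exp (-‖y‖ ^ 2 / (4 * s)))]
  exact setIntegral_closedBall_le_setIntegral_closedBall_zero (antitoneOn_exp_neg_sq_div hs)
    (by fun_prop : Continuous _).locallyIntegrable _ hr.le

theorem stmt9 (N : ℕ) (hN : 1 ≤ N) (r s : ℝ) (hr : 0 < r) (hs : 0 < s)
    (a : EuclideanSpace ℝ (Fin N)) :
    ∫ y in Metric.closedBall (0 : EuclideanSpace ℝ (Fin N)) r,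
        Real.exp (-‖y - a‖ ^ 2 / (4 * s)) ≤
      ∫ y in Metric.closedBall (0 : EuclideanSpace ℝ (Fin N)) r,
        Real.exp (-‖y‖ ^ 2 / (4 * s)) :=
  stmt9_general N r s hr hs a
end

section
/- Let n ≥ 1 be an integer and t > 1. Then the integral of ∏_{j=1}^n (t_j - t_{j-1})^{-1} over the region {(t₁,…,t_n) ∈ ℝ^n : 0 < t₁ < t₂ < ⋯ < t_n < t and t_j - t_{j-1} > 1 for all j = 1,…,n}, where t₀ = 0, is at most (log t)^n. -/
/-!
Substituting the gaps `u_j = v_j - v_{j-1}` is a unimodular (lower unitriangular) linear change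
of variables, and it maps the region into the cube `(1, t)ⁿ`, because every gap lies in `(1, t)`
when `0 < v_1 < ⋯ < v_n < t`. The integral is therefore at most
`∫_{(1,t)ⁿ} ∏ u_j⁻¹ = (∫_1^t x⁻¹ dx)ⁿ = (log t)ⁿ`.
-/

open MeasureTheory Set

/-- For a tuple `t = (t_1, …, t_n)`, `prevVal t j` is `t_{j-1}`, with the
convention `t_0 = 0`. -/
noncomputable def prevVal {n : ℕ} (t : Fin n → ℝ) (j : Fin n) : ℝ :=
  if _ : (j : ℕ) = 0 then 0
  else t ⟨(j : ℕ) - 1, Nat.lt_of_le_of_lt (Nat.sub_le _ _) j.isLt⟩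

section LinearChangeOfVariables

variable {E : Type*} [NormedAddCommGroup E] [NormedSpace ℝ E] [MeasurableSpace E] [BorelSpace E]
  [FiniteDimensional ℝ E]

theorem LinearMap.measurePreserving_of_abs_det_eq_one (μ : Measure E) [μ.IsAddHaarMeasure]
    {f : E →ₗ[ℝ] E} (hf : |LinearMap.det f| = 1) : MeasurePreserving f μ μ := by
  have hf₀ : LinearMap.det f ≠ 0 := fun h => by simp [h] at hf
  refine ⟨f.continuous_of_finiteDimensional.measurable, ?_⟩
  rw [Measure.map_linearMap_addHaar_eq_smul_addHaar μ hf₀, abs_inv, hf]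
  simp

theorem LinearMap.measurableEmbedding_of_det_ne_zero {f : E →ₗ[ℝ] E}
    (hf : LinearMap.det f ≠ 0) : MeasurableEmbedding f :=
  (f.equivOfDetNeZero hf).toContinuousLinearEquiv.toHomeomorph.measurableEmbedding

end LinearChangeOfVariables

section ProductOverCube

variable {ι 𝕜 E : Type*} [Fintype ι] [RCLike 𝕜] [MeasureSpace E]
  [SigmaFinite (volume : Measure E)]

theorem integrableOn_univ_pi_prod {f : E → 𝕜} {s : Set E} (hf : IntegrableOn f s) :
    IntegrableOn (fun x : ι → E => ∏ i, f (x i)) (univ.pi fun _ => s) := by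
  rw [IntegrableOn, volume_pi, Measure.restrict_pi_pi]
  exact Integrable.fintype_prod fun _ => hf

theorem setIntegral_univ_pi_prod_eq_pow (f : E → 𝕜) (s : Set E) :
    ∫ x in univ.pi (fun _ : ι => s), ∏ i, f (x i) = (∫ x in s, f x) ^ Fintype.card ι := by
  rw [volume_pi, Measure.restrict_pi_pi]
  exact integral_fintype_prod_eq_pow f

end ProductOverCube

theorem integrableOn_inv_Ioo_one (t : ℝ) : IntegrableOn (fun x : ℝ => x⁻¹) (Ioo 1 t) :=
  (ContinuousOn.integrableOn_Icc (continuousOn_inv₀.mono fun _ hx =>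
    (zero_lt_one.trans_le hx.1).ne')).mono_set Ioo_subset_Icc_self

theorem integral_inv_Ioo_one {t : ℝ} (ht : 1 ≤ t) : ∫ x in Ioo 1 t, x⁻¹ = Real.log t := by
  rw [← integral_Ioc_eq_integral_Ioo, ← intervalIntegral.integral_of_le ht,
    integral_inv_of_pos one_pos (by linarith), div_one]

theorem prevVal_nonneg {n : ℕ} {v : Fin n → ℝ} (hv : ∀ i, 0 ≤ v i) (j : Fin n) :
    0 ≤ prevVal v j := by
  unfold prevVal
  split_ifs
  exacts [le_rfl, hv _]

theorem prevVal_single_of_le {n : ℕ} {i j : Fin n} (hij : i ≤ j) (c : ℝ) :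
    prevVal (Pi.single j c) i = 0 := by
  unfold prevVal
  split_ifs with hi
  · rfl
  · rw [Pi.single_eq_of_ne]
    exact Fin.ne_of_val_ne (by simp only; omega)

theorem prevVal_add {n : ℕ} (x y : Fin n → ℝ) (j : Fin n) :
    prevVal (x + y) j = prevVal x j + prevVal y j := by
  unfold prevVal; split_ifs <;> simp

theorem prevVal_smul {n : ℕ} (c : ℝ) (x : Fin n → ℝ) (j : Fin n) :
    prevVal (c • x) j = c * prevVal x j := by
  unfold prevVal; split_ifs <;> simp

noncomputable def gapMap (n : ℕ) : (Fin n → ℝ) →ₗ[ℝ] (Fin n → ℝ) where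
  toFun v j := v j - prevVal v j
  map_add' x y := by funext j; simp only [prevVal_add, Pi.add_apply]; ring
  map_smul' c x := by
    funext j
    simp only [prevVal_smul, Pi.smul_apply, smul_eq_mul, RingHom.id_apply]
    ring

theorem gapMap_apply {n : ℕ} (v : Fin n → ℝ) (j : Fin n) : gapMap n v j = v j - prevVal v j :=
  rfl

theorem det_gapMap (n : ℕ) : LinearMap.det (gapMap n) = 1 := by
  rw [← LinearMap.det_toMatrix', Matrix.det_of_isLowerTriangular _ fun i j hij => ?_]
  · simp [LinearMap.toMatrix'_apply, gapMap_apply, prevVal_single_of_le le_rfl]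
  · have hij : i < j := hij
    simp [LinearMap.toMatrix'_apply, gapMap_apply, Pi.single_eq_of_ne hij.ne,
      prevVal_single_of_le hij.le]

theorem measurePreserving_gapMap (n : ℕ) : MeasurePreserving (gapMap n) :=
  (gapMap n).measurePreserving_of_abs_det_eq_one volume (by rw [det_gapMap, abs_one])

theorem measurableEmbedding_gapMap (n : ℕ) : MeasurableEmbedding (gapMap n) :=
  (gapMap n).measurableEmbedding_of_det_ne_zero (by rw [det_gapMap]; exact one_ne_zero)

theorem gapMap_mem_univ_pi_Ioo {n : ℕ} {v : Fin n → ℝ} {t : ℝ} (hv : ∀ i, 0 ≤ v i)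
    (hvt : ∀ i, v i < t) (hgap : ∀ j, 1 < v j - prevVal v j) :
    gapMap n v ∈ univ.pi fun _ => Ioo 1 t := fun j _ =>
  ⟨hgap j, by rw [gapMap_apply]; linarith [hvt j, prevVal_nonneg hv j]⟩

theorem stmt12 (n : ℕ) (hn : 0 < n) (t : ℝ) (ht : 1 < t) :
    ∫ v in {v : Fin n → ℝ | 0 < v ⟨0, hn⟩ ∧ StrictMono v ∧ (∀ j, v j < t) ∧
        ∀ j, 1 < v j - prevVal v j},
      ∏ j, (v j - prevVal v j)⁻¹ ≤ (Real.log t) ^ n := by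
  set cube : Set (Fin n → ℝ) := univ.pi fun _ => Ioo 1 t
  have hcube : MeasurableSet (gapMap n ⁻¹' cube) :=
    (MeasurableSet.univ_pi fun _ => measurableSet_Ioo).preimage
      (measurePreserving_gapMap n).measurable
  have hsub : {v : Fin n → ℝ | 0 < v ⟨0, hn⟩ ∧ StrictMono v ∧ (∀ j, v j < t) ∧
      ∀ j, 1 < v j - prevVal v j} ⊆ gapMap n ⁻¹' cube := by
    rintro v ⟨hv₀, hmono, hvt, hgap⟩
    have hv : ∀ i, 0 ≤ v i := fun i =>
      hv₀.le.trans (hmono.monotone (Fin.le_iff_val_le_val.2 (Nat.zero_le _)))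
    exact gapMap_mem_univ_pi_Ioo hv hvt hgap
  have hint : IntegrableOn (fun v => ∏ j, (v j - prevVal v j)⁻¹) (gapMap n ⁻¹' cube) :=
    ((measurePreserving_gapMap n).integrableOn_comp_preimage (measurableEmbedding_gapMap n)).2
      (integrableOn_univ_pi_prod (integrableOn_inv_Ioo_one t))
  have hnonneg :
      0 ≤ᵐ[volume.restrict (gapMap n ⁻¹' cube)] fun v => ∏ j, (v j - prevVal v j)⁻¹ :=
    ae_restrict_of_forall_mem hcube fun v hv =>
      Finset.prod_nonneg fun j _ => inv_nonneg.2 (zero_lt_one.trans (hv j trivial).1).le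
  calc _ ≤ ∫ v in gapMap n ⁻¹' cube, ∏ j, (v j - prevVal v j)⁻¹ :=
        setIntegral_mono_set hint hnonneg hsub.eventuallyLE
    _ = ∫ u in cube, ∏ j, (u j)⁻¹ :=
        (measurePreserving_gapMap n).setIntegral_preimage_emb (measurableEmbedding_gapMap n)
          (fun u => ∏ j, (u j)⁻¹) cube
    _ = Real.log t ^ n := by
        rw [setIntegral_univ_pi_prod_eq_pow, integral_inv_Ioo_one ht.le, Fintype.card_fin]
end

section
/- Let N ≥ 3, H ∈ (1/N, 1/2] and δ > 0. Let τ : (0,∞) → [0,∞) be measurable and bounded, and suppose there exists r₀ ∈ (0, 1/e) such that τ(l) ≤ l^{1/H} (log log(1/l))^{1+δ} for all l ∈ (0, r₀]. Then there exist constants C > 0 and r₁ ∈ (0, r₀] such that r^N ∫_r^∞ l^{-N-1} τ(l) dl ≤ C r^{1/H} (log log(1/r))^{1+δ} for all r ∈ (0, r₁]. -/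
/-!
For `r ≤ r₀` the profile `τ` is dominated on the whole tail `(r, ∞)` by a single power
`K l ^ (1/H)`: on `(r, r₀]` by the hypothesis, since `log (log (1/l))` decreases in `l`, and on
`(r₀, ∞)` because `τ ≤ M ≤ M r₀ ^ (-1/H) l ^ (1/H)`. As `1/H < N`, integrating this power against
`l ^ (-N-1)` over `(r, ∞)` gives `K r ^ (1/H - N) / (N - 1/H)`, and `K` is at most a constant
multiple of `log (log (1/r)) ^ (1+δ)` because the latter is at least `1` for small `r`.
-/

open MeasureTheory Set Real

theorem le_log_one_div {l c : ℝ} (hl0 : 0 < l) (hl : l ≤ exp (-c)) : c ≤ log (1 / l) := by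
  rw [one_div, log_inv, le_neg]
  simpa using log_le_log hl0 hl

theorem le_log_log_one_div {l c : ℝ} (hl0 : 0 < l) (hl : l ≤ exp (-exp c)) :
    c ≤ log (log (1 / l)) :=
  (le_log_iff_exp_le ((exp_pos c).trans_le (le_log_one_div hl0 hl))).2 (le_log_one_div hl0 hl)

theorem antitoneOn_log_log_one_div_rpow {p : ℝ} (hp : 0 ≤ p) :
    AntitoneOn (fun l => log (log (1 / l)) ^ p) (Ioc 0 (exp 1)⁻¹) := by
  intro l hl l' hl' hll'
  rw [← exp_neg] at hl hl'
  have hlog' : 1 ≤ log (1 / l') := le_log_one_div hl'.1 hl'.2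
  have hloglog' : 0 ≤ log (log (1 / l')) :=
    le_log_log_one_div hl'.1 (by rw [exp_zero]; exact hl'.2)
  exact rpow_le_rpow hloglog'
    (log_le_log (by linarith) (log_le_log (by simpa using hl'.1)
      (one_div_le_one_div_of_le hl.1 hll'))) hp

theorem le_mul_rpow_of_le_rpow_mul_antitoneOn {τ g : ℝ → ℝ} {a M r r₀ : ℝ} (ha : 0 ≤ a)
    (hM : 0 ≤ M) (hr : 0 < r) (hrr₀ : r ≤ r₀) (hg : AntitoneOn g (Ioc 0 r₀)) (hgr : 0 ≤ g r)
    (hτle : ∀ l ∈ Ioc 0 r₀, τ l ≤ l ^ a * g l) (hτM : ∀ l > r₀, τ l ≤ M) :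
    ∀ l ∈ Ioi r, τ l ≤ (g r + M * r₀ ^ (-a)) * l ^ a := by
  have hr₀ : 0 < r₀ := hr.trans_le hrr₀
  have hB : 0 ≤ M * r₀ ^ (-a) := mul_nonneg hM (rpow_nonneg hr₀.le _)
  intro l hl
  have hl0 : 0 < l := hr.trans hl
  rcases le_or_gt l r₀ with hlr₀ | hr₀l
  · calc τ l ≤ l ^ a * g l := hτle l ⟨hl0, hlr₀⟩
      _ ≤ l ^ a * g r :=
          mul_le_mul_of_nonneg_left (hg ⟨hr, hrr₀⟩ ⟨hl0, hlr₀⟩ hl.le)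
            (rpow_nonneg hl0.le _)
      _ ≤ (g r + M * r₀ ^ (-a)) * l ^ a := by nlinarith [rpow_nonneg hl0.le a]
  · calc τ l ≤ M := hτM l hr₀l
      _ = M * r₀ ^ (-a) * r₀ ^ a := by
          rw [mul_assoc, ← rpow_add hr₀, neg_add_cancel, rpow_zero, mul_one]
      _ ≤ M * r₀ ^ (-a) * l ^ a :=
          mul_le_mul_of_nonneg_left (rpow_le_rpow hr₀.le hr₀l.le ha) hB
      _ ≤ (g r + M * r₀ ^ (-a)) * l ^ a := by nlinarith [rpow_nonneg hl0.le a]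

theorem rpow_mul_setIntegral_Ioi_rpow_mul_le {f : ℝ → ℝ} {a s K r : ℝ} (has : a < s)
    (hr : 0 < r) (hf0 : ∀ l ∈ Ioi r, 0 ≤ f l) (hfK : ∀ l ∈ Ioi r, f l ≤ K * l ^ a) :
    r ^ s * ∫ l in Ioi r, l ^ (-s - 1) * f l ≤ K * r ^ a / (s - a) := by
  have hexp : a - s - 1 < -1 := by linarith
  have hmono : ∫ l in Ioi r, l ^ (-s - 1) * f l ≤ ∫ l in Ioi r, K * l ^ (a - s - 1) := by
    refine integral_mono_of_nonneg ?_ ((integrableOn_Ioi_rpow_of_lt hexp hr).const_mul K) ?_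
    · filter_upwards [ae_restrict_mem measurableSet_Ioi] with l hl
      exact mul_nonneg (rpow_nonneg (hr.trans hl).le _) (hf0 l hl)
    · filter_upwards [ae_restrict_mem measurableSet_Ioi] with l hl
      have hl0 : 0 < l := hr.trans hl
      calc l ^ (-s - 1) * f l ≤ l ^ (-s - 1) * (K * l ^ a) :=
            mul_le_mul_of_nonneg_left (hfK l hl) (rpow_nonneg hl0.le _)
        _ = K * l ^ (a - s - 1) := by
            rw [mul_left_comm, ← rpow_add hl0]; ring_nf
  have hval : r ^ s * ∫ l in Ioi r, K * l ^ (a - s - 1) = K * r ^ a / (s - a) := by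
    rw [integral_const_mul, integral_Ioi_rpow_of_lt hexp hr, sub_add_cancel]
    calc r ^ s * (K * (-r ^ (a - s) / (a - s))) = K * (r ^ s * r ^ (a - s)) / (s - a) := by
          rw [neg_div, ← div_neg, neg_sub]; ring
      _ = K * r ^ a / (s - a) := by rw [← rpow_add hr, add_sub_cancel]
  calc r ^ s * ∫ l in Ioi r, l ^ (-s - 1) * f l
      ≤ r ^ s * ∫ l in Ioi r, K * l ^ (a - s - 1) :=
        mul_le_mul_of_nonneg_left hmono (rpow_nonneg hr.le _)
    _ = K * r ^ a / (s - a) := hval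

theorem stmt17_general (N : ℕ) (hN : 3 ≤ N) (H δ : ℝ)
    (hH1 : 1 / (N : ℝ) < H) (hδ : 0 < δ)
    (τ : ℝ → ℝ) (hτ0 : ∀ l > (0:ℝ), 0 ≤ τ l)
    (M : ℝ) (hτbdd : ∀ l > (0:ℝ), τ l ≤ M)
    (r₀ : ℝ) (hr₀ : r₀ ∈ Ioo (0:ℝ) (Real.exp 1)⁻¹)
    (hτle : ∀ l ∈ Ioc (0:ℝ) r₀,
      τ l ≤ l ^ (1 / H) * Real.log (Real.log (1 / l)) ^ (1 + δ)) :
    ∃ C > (0:ℝ), ∃ r₁ ∈ Ioc (0:ℝ) r₀, ∀ r ∈ Ioc (0:ℝ) r₁,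
      r ^ N * ∫ l in Ioi r, l ^ (-(N : ℝ) - 1) * τ l ≤
        C * r ^ (1 / H) * Real.log (Real.log (1 / r)) ^ (1 + δ) := by
  have hN0 : (0 : ℝ) < N := by exact_mod_cast (by omega : 0 < N)
  have hH0 : 0 < H := (one_div_pos.2 hN0).trans hH1
  have haN : 0 < (N : ℝ) - 1 / H := by
    rw [sub_pos, div_lt_iff₀ hH0]; rwa [div_lt_iff₀ hN0, mul_comm] at hH1
  have hM : 0 ≤ M := (hτ0 1 one_pos).trans (hτbdd 1 one_pos)
  set B := M * r₀ ^ (-(1 / H))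
  have hB : 0 ≤ B := mul_nonneg hM (rpow_nonneg hr₀.1.le _)
  refine ⟨(1 + B) / (N - 1 / H), div_pos (by linarith) haN, min r₀ (exp (-exp 1)),
    ⟨lt_min hr₀.1 (exp_pos _), min_le_left _ _⟩, fun r hr => ?_⟩
  set L := log (log (1 / r)) ^ (1 + δ)
  have hL : 1 ≤ L :=
    one_le_rpow (le_log_log_one_div hr.1 (hr.2.trans (min_le_right _ _))) (by linarith)
  have hτr := le_mul_rpow_of_le_rpow_mul_antitoneOn (one_div_pos.2 hH0).le hM hr.1
    (hr.2.trans (min_le_left _ _))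
    ((antitoneOn_log_log_one_div_rpow (by linarith)).mono (Ioc_subset_Ioc_right hr₀.2.le))
    (by linarith) hτle (fun l hl => hτbdd l (hr₀.1.trans hl))
  calc r ^ N * ∫ l in Ioi r, l ^ (-(N : ℝ) - 1) * τ l
      = r ^ (N : ℝ) * ∫ l in Ioi r, l ^ (-(N : ℝ) - 1) * τ l := by rw [rpow_natCast]
    _ ≤ (L + B) * r ^ (1 / H) / (N - 1 / H) :=
        rpow_mul_setIntegral_Ioi_rpow_mul_le (sub_pos.1 haN) hr.1
          (fun l hl => hτ0 l (hr.1.trans hl)) hτr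
    _ ≤ (1 + B) * L * r ^ (1 / H) / (N - 1 / H) := by
        have hra := rpow_nonneg hr.1.le (1 / H)
        gcongr
        nlinarith
    _ = (1 + B) / (N - 1 / H) * r ^ (1 / H) * L := by ring

theorem stmt17 (N : ℕ) (hN : 3 ≤ N) (H δ : ℝ)
    (hH1 : 1 / (N : ℝ) < H) (hH2 : H ≤ 1 / 2) (hδ : 0 < δ)
    (τ : ℝ → ℝ) (hτm : Measurable τ) (hτ0 : ∀ l > (0:ℝ), 0 ≤ τ l)
    (M : ℝ) (hτbdd : ∀ l > (0:ℝ), τ l ≤ M)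
    (r₀ : ℝ) (hr₀ : r₀ ∈ Ioo (0:ℝ) (Real.exp 1)⁻¹)
    (hτle : ∀ l ∈ Ioc (0:ℝ) r₀,
      τ l ≤ l ^ (1 / H) * Real.log (Real.log (1 / l)) ^ (1 + δ)) :
    ∃ C > (0:ℝ), ∃ r₁ ∈ Ioc (0:ℝ) r₀, ∀ r ∈ Ioc (0:ℝ) r₁,
      r ^ N * ∫ l in Ioi r, l ^ (-(N : ℝ) - 1) * τ l ≤
        C * r ^ (1 / H) * Real.log (Real.log (1 / r)) ^ (1 + δ) :=
  stmt17_general N hN H δ hH1 hδ τ hτ0 M hτbdd r₀ hr₀ hτle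
end

section
/- Let N ≥ 1, T > 0 and s₀ ∈ (0,T], and let ξ : [0,T] → ℝ^N be continuous. Then σ(r) = O(r²) as r → 0 (i.e., there exist A > 0 and R > 0 with σ(r) ≤ A r² for all r ∈ (0,R)) if and only if liminf_{s ↓ 0} s^{-1/2} sup_{T-s < t < T} |ξ(T) - ξ(t)| ∈ (0, ∞], i.e., this liminf is strictly positive (possibly infinite). -/
/-! For `0 < s ≤ s₀` and `r ≥ 0` the exit time satisfies `σ(r) < s` exactly when
`r < M(s) := sup_{T-s<t<T} |ξ(T) - ξ(t)|`: both say that the path leaves the `r`-ball around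
`ξ(T)` during the last `s` units of time. Under this duality the bound `σ(r) ≤ A r²` and a bound
`M(s) > c √s` are converse to each other, with `A` and `c⁻²` comparable. -/

open Set Filter Topology

theorem ENNReal.pos_liminf_ofReal_iff {α : Type*} {l : Filter α} (g : α → ℝ) :
    0 < liminf (fun x => ENNReal.ofReal (g x)) l ↔ ∃ c > (0 : ℝ), ∀ᶠ x in l, c < g x := by
  constructor
  · intro h
    obtain ⟨c, hc0, hc⟩ := exists_between h
    have hc_top : c ≠ ⊤ := hc.ne_top
    refine ⟨c.toReal, ENNReal.toReal_pos hc0.ne' hc_top, ?_⟩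
    filter_upwards [eventually_lt_of_lt_liminf hc] with x hx
    exact (ENNReal.lt_ofReal_iff_toReal_lt hc_top).mp hx
  · rintro ⟨c, hc0, hc⟩
    refine (ENNReal.ofReal_pos.mpr hc0).trans_le (le_liminf_of_le (by isBoundedDefault) ?_)
    filter_upwards [hc] with x hx
    exact ENNReal.ofReal_le_ofReal hx.le

theorem lt_rpow_neg_half_mul_iff {s c m : ℝ} (hs : 0 < s) :
    c < s ^ (-(1 : ℝ) / 2) * m ↔ c * √s < m := by
  rw [neg_div, Real.rpow_neg hs.le, ← Real.sqrt_eq_rpow, inv_mul_eq_div,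
    lt_div_iff₀ (Real.sqrt_pos.mpr hs)]

theorem exists_sq_bound_iff_eventually_sqrt_lt {σ M : ℝ → ℝ} {s₀ : ℝ} (hs₀ : 0 < s₀)
    (hdual : ∀ r s, 0 < r → 0 < s → s ≤ s₀ → (σ r < s ↔ r < M s)) :
    (∃ A > (0 : ℝ), ∃ R > (0 : ℝ), ∀ r ∈ Ioo 0 R, σ r ≤ A * r ^ 2) ↔
      ∃ c > (0 : ℝ), ∀ᶠ s in 𝓝[>] 0, c * √s < M s := by
  constructor
  · rintro ⟨A, hA, R, hR, hσ⟩
    -- `r := c √s` with `c² = 1/(2A)` gives `σ r ≤ A r² = s/2 < s`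
    set c := √(1 / (2 * A))
    have hc : 0 < c := Real.sqrt_pos.mpr (by positivity)
    refine ⟨c, hc, ?_⟩
    filter_upwards [Ioo_mem_nhdsGT (lt_min hs₀ (pow_pos (div_pos hR hc) 2))] with s ⟨hs, hs_lt⟩
    have hr : 0 < c * √s := mul_pos hc (Real.sqrt_pos.mpr hs)
    have hrR : c * √s < R := by
      have : √s < R / c := by
        rw [Real.sqrt_lt' (div_pos hR hc)]; exact hs_lt.trans_le (min_le_right _ _)
      rwa [lt_div_iff₀ hc, mul_comm] at this
    refine (hdual _ s hr hs (hs_lt.le.trans (min_le_left _ _))).mp ?_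
    calc σ (c * √s) ≤ A * (c * √s) ^ 2 := hσ _ ⟨hr, hrR⟩
      _ = s / 2 := by
        rw [mul_pow, Real.sq_sqrt (by positivity), Real.sq_sqrt hs.le]; field_simp
      _ < s := half_lt_self hs
  · rintro ⟨c, hc, hM⟩
    obtain ⟨δ, hδ, hδM⟩ := mem_nhdsGT_iff_exists_Ioo_subset.mp hM
    -- `s := (r/c)²` gives `r = c √s < M s`, hence `σ r < s = c⁻² r²`
    refine ⟨1 / c ^ 2, by positivity, c * √(min δ s₀), mul_pos hc (Real.sqrt_pos.mpr
      (lt_min hδ hs₀)), fun r ⟨hr, hrR⟩ => ?_⟩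
    have hs : 0 < (r / c) ^ 2 := by positivity
    have hs_lt : (r / c) ^ 2 < min δ s₀ := by
      rw [← Real.lt_sqrt (div_pos hr hc).le, div_lt_iff₀ hc, mul_comm]; exact hrR
    have hr_eq : c * √((r / c) ^ 2) = r := by
      rw [Real.sqrt_sq (div_pos hr hc).le]; field_simp
    have hM_s : c * √((r / c) ^ 2) < M ((r / c) ^ 2) :=
      hδM ⟨hs, hs_lt.trans_le (min_le_left _ _)⟩
    have hσ_lt : σ r < (r / c) ^ 2 :=
      (hdual r _ hr hs (hs_lt.le.trans (min_le_right _ _))).mpr (hr_eq.symm.trans_lt hM_s)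
    exact (hσ_lt.trans_eq (by ring)).le

section ExitTime

variable {E : Type*} [SeminormedAddCommGroup E] {ξ : ℝ → E} {T s₀ r s : ℝ}

theorem bddAbove_norm_sub_image_Ioo (hξ : ContinuousOn ξ (Icc 0 T)) (hs : s ≤ T) :
    BddAbove ((fun t => ‖ξ T - ξ t‖) '' Ioo (T - s) T) :=
  ((isCompact_Icc.image_of_continuousOn (continuousOn_const.sub hξ).norm).bddAbove).mono
    (image_mono fun _ ht => show _ ∈ Icc 0 T from ⟨by linarith [ht.1], ht.2.le⟩)

theorem sInf_exit_lt_iff (hξ : ContinuousOn ξ (Icc 0 T)) (hs₀T : s₀ ≤ T) (hr : 0 ≤ r)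
    (hs : 0 < s) (hss₀ : s ≤ s₀) :
    sInf (insert s₀ {u ∈ Icc 0 s₀ | r < ‖ξ (T - u) - ξ T‖}) < s ↔
      r < sSup ((fun t => ‖ξ T - ξ t‖) '' Ioo (T - s) T) := by
  set S := {u ∈ Icc 0 s₀ | r < ‖ξ (T - u) - ξ T‖}
  have hbdd : BddBelow (insert s₀ S) :=
    ⟨0, by rintro x (rfl | hx); exacts [(hs.trans_le hss₀).le, hx.1.1]⟩
  constructor
  · intro hlt
    obtain ⟨s', hs'_mem, hs'⟩ := exists_lt_of_csInf_lt (insert_nonempty _ _) hlt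
    have hs'S : s' ∈ S := (mem_insert_iff.mp hs'_mem).resolve_left
      (by rintro rfl; exact hss₀.not_gt hs')
    obtain ⟨⟨hs'0, -⟩, hrs'⟩ := hs'S
    -- `s' ≠ 0` because the path starts inside the ball
    have hs'pos : 0 < s' := hs'0.lt_of_ne <| by
      rintro rfl; simp only [sub_zero, sub_self, norm_zero] at hrs'; exact hr.not_gt hrs'
    refine hrs'.trans_le (le_csSup (bddAbove_norm_sub_image_Ioo hξ (hss₀.trans hs₀T))
      ⟨T - s', ⟨by linarith, by linarith⟩, norm_sub_rev _ _⟩)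
  · intro hlt
    obtain ⟨_, ⟨t, ht, rfl⟩, hrt⟩ :=
      exists_lt_of_lt_csSup ((nonempty_Ioo.mpr (by linarith)).image _) hlt
    have hmem : T - t ∈ S := ⟨⟨by linarith [ht.2], by linarith [ht.1]⟩, by
      rwa [sub_sub_cancel, norm_sub_rev]⟩
    exact (csInf_le hbdd (mem_insert_of_mem _ hmem)).trans_lt (by linarith [ht.1])

end ExitTime

theorem stmt19_general (N : ℕ) (T : ℝ)
    (s₀ : ℝ) (hs₀ : s₀ ∈ Ioc 0 T)
    (ξ : ℝ → EuclideanSpace ℝ (Fin N)) (hξ : ContinuousOn ξ (Icc 0 T))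
    -- the first exit time σ (equal to s₀ when the set is empty)
    (σ : ℝ → ℝ)
    (hσ : ∀ r : ℝ, σ r = sInf (insert s₀ {s ∈ Icc 0 s₀ | r < ‖ξ (T - s) - ξ T‖})) :
    -- σ(r) = O(r²) as r → 0 iff the liminf is strictly positive (possibly ∞)
    (∃ A > (0:ℝ), ∃ R > (0:ℝ), ∀ r ∈ Ioo (0:ℝ) R, σ r ≤ A * r ^ 2) ↔
      0 < liminf (fun s : ℝ => ENNReal.ofReal
          (s ^ (-(1:ℝ) / 2) * sSup ((fun t => ‖ξ T - ξ t‖) '' Ioo (T - s) T)))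
        (nhdsWithin 0 (Ioi 0)) := by
  rw [exists_sq_bound_iff_eventually_sqrt_lt hs₀.1 fun r s hr hs hss₀ =>
      hσ r ▸ sInf_exit_lt_iff hξ hs₀.2 hr.le hs hss₀,
    ENNReal.pos_liminf_ofReal_iff]
  refine exists_congr fun c => and_congr_right fun _ => eventually_congr ?_
  filter_upwards [self_mem_nhdsWithin] with s hs
  exact (lt_rpow_neg_half_mul_iff hs).symm

theorem stmt19 (N : ℕ) (hN : 1 ≤ N) (T : ℝ) (hT : 0 < T)
    (s₀ : ℝ) (hs₀ : s₀ ∈ Ioc 0 T)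
    (ξ : ℝ → EuclideanSpace ℝ (Fin N)) (hξ : ContinuousOn ξ (Icc 0 T))
    -- the first exit time σ (equal to s₀ when the set is empty)
    (σ : ℝ → ℝ)
    (hσ : ∀ r : ℝ, σ r = sInf (insert s₀ {s ∈ Icc 0 s₀ | r < ‖ξ (T - s) - ξ T‖})) :
    -- σ(r) = O(r²) as r → 0 iff the liminf is strictly positive (possibly ∞)
    (∃ A > (0:ℝ), ∃ R > (0:ℝ), ∀ r ∈ Ioo (0:ℝ) R, σ r ≤ A * r ^ 2) ↔
      0 < liminf (fun s : ℝ => ENNReal.ofReal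
          (s ^ (-(1:ℝ) / 2) * sSup ((fun t => ‖ξ T - ξ t‖) '' Ioo (T - s) T)))
        (nhdsWithin 0 (Ioi 0)) :=
  stmt19_general N T s₀ hs₀ ξ hξ σ hσ
end
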